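/- Let U → X → (Y, Z) be a Markov chain and K a deterministic function of X taking at most p values. Then I(U;Y) − I(U;Z) ≤ max_k [I(X;Y|K=k) − I(X;Z|K=k) + I(X;Z|U,K=k) − I(X;Y|U,K=k)] + 2·log₂ p. -/

import Mathlib

open Finset

/-- Mutual information (in bits) of a finite joint pmf `j` on `S × T`. -/
noncomputable def mi {S T : Type*} [Fintype S] [Fintype T] (j : S → T → ℝ) : ℝ :=
  ∑ s, ∑ t, j s t * Real.logb 2 (j s t / ((∑ t', j s t') * (∑ s', j s' t)))

/-- Conditional mutual information `I(S; T | U)` for a joint pmf `j` on `U × S × T`. -/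
noncomputable def condMI {U S T : Type*} [Fintype U] [Fintype S] [Fintype T]
    (j : U → S → T → ℝ) : ℝ :=
  ∑ u, (∑ s, ∑ t, j u s t) *
    mi (fun s t => j u s t / (∑ s', ∑ t', j u s' t'))

/-!
For each `k`, the chain `U → X → (Y, Z)` survives conditioning on `K = k` because `K` is a
function of `X`, and under a Markov chain `U → X → T` one has `I(U;T) = I(X;T) - I(X;T|U)`.
So the bracket for `k` equals `I(U;Y|K=k) - I(U;Z|K=k)`, and its average with weights
`P(K = k)` is at most its maximum. It remains to compare `I(U;Y) - I(U;Z)` with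
`I(U;Y|K) - I(U;Z|K)`. By the chain rule `I(U;T) - I(U;T|K) - H(K) = H(K|U,T) - H(K|U) - H(K|T)`;
the terms `H(K|U)` cancel in the difference, which leaves
`H(K|U,Y) - H(K|Y) - H(K|U,Z) + H(K|Z) ≤ 2 log₂ p`.

All quantities are evaluated on unnormalized masses, so that conditioning on `K = k` is
restriction to the fiber `f x = k`.
-/

open Real

noncomputable def mulLogb (x : ℝ) : ℝ := x * logb 2 x

@[simp] lemma mulLogb_zero : mulLogb 0 = 0 := by simp [mulLogb]

lemma mulLogb_div {a c : ℝ} (ha : 0 ≤ a) (hc : 0 < c) :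
    mulLogb (a / c) = mulLogb a / c - a / c * logb 2 c := by
  rcases ha.eq_or_lt with rfl | ha
  · simp
  · simp only [mulLogb]
    rw [logb_div ha.ne' hc.ne']
    ring

lemma convexOn_mulLogb : ConvexOn ℝ (Set.Ici 0) mulLogb := by
  have hmul : mulLogb = fun x => (log 2)⁻¹ • (x * log x) := by
    funext x
    simp only [mulLogb, logb, smul_eq_mul]
    ring
  rw [hmul]
  exact convexOn_mul_log.smul (inv_nonneg.mpr (log_nonneg one_le_two))

section Entropy

variable {ι : Type*} [Fintype ι]

lemma sum_mulLogb_le_mulLogb_sum (a : ι → ℝ) (ha : ∀ i, 0 ≤ a i) :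
    ∑ i, mulLogb (a i) ≤ mulLogb (∑ i, a i) := by
  simp only [mulLogb, sum_mul]
  refine sum_le_sum fun i _ => ?_
  rcases (ha i).eq_or_lt with h | h
  · simp [← h]
  · exact mul_le_mul_of_nonneg_left
      (logb_le_logb_of_le one_lt_two h (single_le_sum (fun j _ => ha j) (mem_univ i)))
      (ha i)

lemma mulLogb_sum_sub_le (a : ι → ℝ) (ha : ∀ i, 0 ≤ a i) :
    mulLogb (∑ i, a i) - ∑ i, mulLogb (a i) ≤ (∑ i, a i) * logb 2 (Fintype.card ι) := by
  rcases isEmpty_or_nonempty ι with _ | _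
  · simp
  have hn : (0 : ℝ) < Fintype.card ι := by exact_mod_cast Fintype.card_pos
  set n : ℝ := (Fintype.card ι : ℝ)
  have hjensen := convexOn_mulLogb.map_sum_le (t := univ) (w := fun _ => n⁻¹) (p := a)
    (fun _ _ => by positivity) (by simp [n, hn.ne']) (fun i _ => ha i)
  simp only [smul_eq_mul, inv_mul_eq_div, ← sum_div] at hjensen
  rw [mulLogb_div (sum_nonneg fun i _ => ha i) hn, div_sub' hn.ne',
    div_le_div_iff_of_pos_right hn] at hjensen
  have hcancel : n * ((∑ i, a i) / n * logb 2 n) = (∑ i, a i) * logb 2 n := by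
    field_simp
  linarith

variable {K I : Type*} [Fintype K] [Fintype I]

/-- `H(K | I)`, in bits, of the unnormalized joint mass `r` on `K × I`. -/
noncomputable def condEntropy (r : K → I → ℝ) : ℝ :=
  ∑ i, (mulLogb (∑ k, r k i) - ∑ k, mulLogb (r k i))

lemma condEntropy_nonneg (r : K → I → ℝ) (hr : ∀ k i, 0 ≤ r k i) : 0 ≤ condEntropy r :=
  sum_nonneg fun i _ => sub_nonneg.mpr (sum_mulLogb_le_mulLogb_sum _ fun k => hr k i)

lemma condEntropy_le (r : K → I → ℝ) (hr : ∀ k i, 0 ≤ r k i) :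
    condEntropy r ≤ (∑ i, ∑ k, r k i) * logb 2 (Fintype.card K) := by
  rw [sum_mul]
  exact sum_le_sum fun i _ => mulLogb_sum_sub_le _ fun k => hr k i

end Entropy

section MutualInformation

variable {S T : Type*} [Fintype S] [Fintype T]

lemma mi_eq_sum_mulLogb (j : S → T → ℝ) (hj : ∀ s t, 0 ≤ j s t) :
    mi j = ∑ s, ∑ t, mulLogb (j s t) - ∑ s, mulLogb (∑ t, j s t)
      - ∑ t, mulLogb (∑ s, j s t) := by
  have hterm : ∀ s t, j s t * logb 2 (j s t / ((∑ t', j s t') * (∑ s', j s' t)))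
      = mulLogb (j s t) - j s t * logb 2 (∑ t', j s t') - j s t * logb 2 (∑ s', j s' t) := by
    intro s t
    rcases (hj s t).eq_or_lt with h0 | h0
    · simp [← h0]
    have hrow : 0 < ∑ t', j s t' :=
      h0.trans_le (single_le_sum (fun t' _ => hj s t') (mem_univ t))
    have hcol : 0 < ∑ s', j s' t :=
      h0.trans_le (single_le_sum (fun s' _ => hj s' t) (mem_univ s))
    rw [logb_div h0.ne' (mul_pos hrow hcol).ne', logb_mul hrow.ne' hcol.ne', mulLogb]
    ring
  rw [mi]
  simp only [hterm, sum_sub_distrib]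
  congr 2
  · exact sum_congr rfl fun s _ => by rw [mulLogb, sum_mul]
  · rw [sum_comm]
    exact sum_congr rfl fun t _ => by rw [mulLogb, sum_mul]

lemma mul_mi_div (j : S → T → ℝ) (hj : ∀ s t, 0 ≤ j s t) {c : ℝ} (hc : 0 < c) :
    c * mi (fun s t => j s t / c) = mi j + (∑ s, ∑ t, j s t) * logb 2 c := by
  have hjc : ∀ s t, 0 ≤ j s t / c := fun s t => div_nonneg (hj s t) hc.le
  have hrow : ∀ s, 0 ≤ ∑ t, j s t := fun s => sum_nonneg fun t _ => hj s t
  have hcol : ∀ t, 0 ≤ ∑ s, j s t := fun t => sum_nonneg fun s _ => hj s t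
  rw [mi_eq_sum_mulLogb _ hjc, mi_eq_sum_mulLogb _ hj]
  simp only [← sum_div, mulLogb_div (hj _ _) hc, mulLogb_div (hrow _) hc,
    mulLogb_div (hcol _) hc, sum_sub_distrib, ← sum_mul]
  rw [sum_comm (f := fun s t => j s t)]
  field_simp
  ring

lemma mi_eq_zero_of_sum_eq_zero (j : S → T → ℝ) (hj : ∀ s t, 0 ≤ j s t)
    (h0 : ∑ s, ∑ t, j s t = 0) : mi j = 0 := by
  have hzero : ∀ s t, j s t = 0 := fun s t =>
    (Finset.sum_eq_zero_iff_of_nonneg fun t _ => hj s t).mp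
      ((Finset.sum_eq_zero_iff_of_nonneg fun s _ => sum_nonneg fun t _ => hj s t).mp
        h0 s (mem_univ s)) t (mem_univ t)
  simp [mi, hzero]

lemma mass_mul_mi_div_mass (j : S → T → ℝ) (hj : ∀ s t, 0 ≤ j s t) :
    (∑ s, ∑ t, j s t) * mi (fun s t => j s t / ∑ s', ∑ t', j s' t')
      = mi j + mulLogb (∑ s, ∑ t, j s t) := by
  have hm0 : 0 ≤ ∑ s, ∑ t, j s t := sum_nonneg fun s _ => sum_nonneg fun t _ => hj s t
  rcases hm0.eq_or_lt with h0 | h0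
  · simp [← h0, mi_eq_zero_of_sum_eq_zero j hj h0.symm]
  · rw [mul_mi_div j hj h0, mulLogb]

end MutualInformation

section ConditionalMutualInformation

variable {V S T : Type*} [Fintype V] [Fintype S] [Fintype T]

lemma condMI_eq_sum_mulLogb (j : V → S → T → ℝ) (hj : ∀ v s t, 0 ≤ j v s t) :
    condMI j = ∑ v, ∑ s, ∑ t, mulLogb (j v s t) + ∑ v, mulLogb (∑ s, ∑ t, j v s t)
      - ∑ v, ∑ s, mulLogb (∑ t, j v s t) - ∑ v, ∑ t, mulLogb (∑ s, j v s t) := by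
  simp only [condMI, mass_mul_mi_div_mass _ (hj _), mi_eq_sum_mulLogb _ (hj _),
    sum_add_distrib, sum_sub_distrib]
  ring

lemma mul_condMI_div (j : V → S → T → ℝ) {c : ℝ} (hc : c ≠ 0) :
    c * condMI (fun v s t => j v s t / c) = condMI j := by
  simp only [condMI, ← sum_div, div_div_div_cancel_right₀ hc, mul_sum]
  exact sum_congr rfl fun v _ => by field_simp

end ConditionalMutualInformation

section Decomposition

variable {K S T : Type*} [Fintype K] [Fintype S] [Fintype T]

/-- `I(S;T) - (I(S;T|K) + H(K)) = H(K|S,T) - H(K|S) - H(K|T)`: for unnormalized `mi`,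
`∑ k, mi (q k)` is `I(S;T|K) + H(K)`. -/
lemma mi_sum_sub_sum_mi (q : K → S → T → ℝ) (hq : ∀ k s t, 0 ≤ q k s t) :
    mi (fun s t => ∑ k, q k s t) - ∑ k, mi (q k)
      = condEntropy (fun k (st : S × T) => q k st.1 st.2)
        - condEntropy (fun k s => ∑ t, q k s t) - condEntropy (fun k t => ∑ s, q k s t) := by
  have hswap₁ : ∀ s, ∑ k, ∑ t, mulLogb (q k s t) = ∑ t, ∑ k, mulLogb (q k s t) :=
    fun s => sum_comm
  have hswap₂ : ∀ s, ∑ t, ∑ k, q k s t = ∑ k, ∑ t, q k s t := fun s => sum_comm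
  have hswap₃ : ∀ t, ∑ s, ∑ k, q k s t = ∑ k, ∑ s, q k s t := fun t => sum_comm
  rw [mi_eq_sum_mulLogb _ fun s t => sum_nonneg fun k _ => hq k s t]
  simp only [mi_eq_sum_mulLogb _ (hq _), condEntropy, Fintype.sum_prod_type,
    sum_sub_distrib]
  rw [sum_comm (f := fun k s => ∑ t, mulLogb (q k s t)),
    sum_comm (f := fun k s => mulLogb (∑ t, q k s t)),
    sum_comm (f := fun k t => mulLogb (∑ s, q k s t))]
  simp only [hswap₁, hswap₂, hswap₃]
  ring

/-- The two terms `H(K|S)` from `mi_sum_sub_sum_mi` cancel because `q` and `q'` have the same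
`(K, S)`-marginal; the others are bounded by `0 ≤ H(K|·) ≤ log₂ |K|`. -/
lemma mi_sub_mi_le_sum_mi_sub_mi_add {T' : Type*} [Fintype T'] (q : K → S → T → ℝ)
    (q' : K → S → T' → ℝ) (hq : ∀ k s t, 0 ≤ q k s t) (hq' : ∀ k s t, 0 ≤ q' k s t)
    (hmarg : ∀ k s, ∑ t, q k s t = ∑ t, q' k s t)
    (hmass : ∑ s, ∑ t, ∑ k, q k s t = 1) (hmass' : ∑ s, ∑ t, ∑ k, q' k s t = 1) :
    mi (fun s t => ∑ k, q k s t) - mi (fun s t => ∑ k, q' k s t)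
      ≤ ∑ k, (mi (q k) - mi (q' k)) + 2 * logb 2 (Fintype.card K) := by
  have hdecomp := mi_sum_sub_sum_mi q hq
  have hdecomp' := mi_sum_sub_sum_mi q' hq'
  have hcommon : condEntropy (fun k s => ∑ t, q k s t)
      = condEntropy (fun k s => ∑ t, q' k s t) := by
    simp only [hmarg]
  have hST := condEntropy_le (fun k (st : S × T) => q k st.1 st.2) fun k st => hq k st.1 st.2
  have hT := condEntropy_nonneg (fun k t => ∑ s, q k s t) fun k t =>
    sum_nonneg fun s _ => hq k s t
  have hST' := condEntropy_nonneg (fun k (st : S × T') => q' k st.1 st.2)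
    fun k st => hq' k st.1 st.2
  have hT' := condEntropy_le (fun k t => ∑ s, q' k s t) fun k t =>
    sum_nonneg fun s _ => hq' k s t
  have hmassT' : ∑ t, ∑ k, ∑ s, q' k s t = 1 := by
    calc ∑ t, ∑ k, ∑ s, q' k s t = ∑ t, ∑ s, ∑ k, q' k s t :=
          sum_congr rfl fun t _ => sum_comm
      _ = 1 := by rw [sum_comm, hmass']
  rw [Fintype.sum_prod_type, hmass] at hST
  rw [hmassT'] at hT'
  rw [sum_sub_distrib]
  linarith

end Decomposition

section Markov

variable {U X T : Type*} [Fintype U] [Fintype T]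

/-- `U → X → T` is a Markov chain under the (unnormalized) joint mass `a`:
`P(u,x,t) P(x) = P(u,x) P(x,t)`. -/
def IsMarkovChain (a : U → X → T → ℝ) : Prop :=
  ∀ u x t, a u x t * (∑ u', ∑ t', a u' x t') = (∑ t', a u x t') * (∑ u', a u' x t)

lemma IsMarkovChain.restrict {a : U → X → T → ℝ} (h : IsMarkovChain a) (P : X → Prop)
    [DecidablePred P] : IsMarkovChain fun u x t => if P x then a u x t else 0 := by
  intro u x t
  by_cases hx : P x <;> simp [hx, h u x t]

variable [Fintype X]

/-- `H(U,X,T) = H(U,X) + H(X,T) - H(X)`. -/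
lemma IsMarkovChain.sum_mulLogb {a : U → X → T → ℝ} (h : IsMarkovChain a)
    (ha : ∀ u x t, 0 ≤ a u x t) :
    ∑ u, ∑ x, ∑ t, mulLogb (a u x t)
      = ∑ u, ∑ x, mulLogb (∑ t, a u x t) + ∑ x, ∑ t, mulLogb (∑ u, a u x t)
        - ∑ x, mulLogb (∑ u, ∑ t, a u x t) := by
  have hterm : ∀ u x t, mulLogb (a u x t) = a u x t * logb 2 (∑ t', a u x t')
      + a u x t * logb 2 (∑ u', a u' x t) - a u x t * logb 2 (∑ u', ∑ t', a u' x t') := by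
    intro u x t
    rcases (ha u x t).eq_or_lt with h0 | h0
    · simp [← h0]
    have hrow : 0 < ∑ t', a u x t' :=
      h0.trans_le (single_le_sum (fun t' _ => ha u x t') (mem_univ t))
    have hcol : 0 < ∑ u', a u' x t :=
      h0.trans_le (single_le_sum (fun u' _ => ha u' x t) (mem_univ u))
    have hx : 0 < ∑ u', ∑ t', a u' x t' :=
      hrow.trans_le (single_le_sum (fun u' _ => sum_nonneg fun t' _ => ha u' x t')
        (mem_univ u))
    have hfactor :
        a u x t = (∑ t', a u x t') * (∑ u', a u' x t) / ∑ u', ∑ t', a u' x t' := by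
      rw [eq_div_iff hx.ne', h u x t]
    rw [mulLogb]
    nth_rewrite 2 [hfactor]
    rw [logb_div (mul_pos hrow hcol).ne' hx.ne', logb_mul hrow.ne' hcol.ne']
    ring
  simp only [hterm, sum_add_distrib, sum_sub_distrib]
  congr 2
  · simp only [mulLogb, sum_mul]
  · rw [sum_comm]
    simp only [mulLogb, sum_mul]
    exact sum_congr rfl fun x _ => sum_comm
  · rw [sum_comm]
    simp only [mulLogb, sum_mul]

/-- `I(U;T) = I(X;T) - I(X;T|U)`, with unnormalized `mi`. -/
lemma IsMarkovChain.mi_eq {a : U → X → T → ℝ} (h : IsMarkovChain a)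
    (ha : ∀ u x t, 0 ≤ a u x t) :
    mi (fun u t => ∑ x, a u x t) = mi (fun x t => ∑ u, a u x t) - condMI a := by
  have hswapU : ∀ u, ∑ t, ∑ x, a u x t = ∑ x, ∑ t, a u x t := fun u => sum_comm
  have hswapT : ∀ t, ∑ u, ∑ x, a u x t = ∑ x, ∑ u, a u x t := fun t => sum_comm
  have hswapX : ∀ x, ∑ t, ∑ u, a u x t = ∑ u, ∑ t, a u x t := fun x => sum_comm
  rw [mi_eq_sum_mulLogb _ fun u t => sum_nonneg fun x _ => ha u x t,
    mi_eq_sum_mulLogb _ fun x t => sum_nonneg fun u _ => ha u x t,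
    condMI_eq_sum_mulLogb a ha, h.sum_mulLogb ha]
  simp only [hswapU, hswapT, hswapX]
  ring

end Markov

section Gaps

variable {U X Y Z : Type*} [Fintype U] [Fintype Y] [Fintype Z]

lemma IsMarkovChain.sum_snd {w : U → X → Y → Z → ℝ}
    (h : IsMarkovChain fun u x (yz : Y × Z) => w u x yz.1 yz.2) :
    IsMarkovChain fun u x y => ∑ z, w u x y z := by
  intro u x y
  dsimp only
  have hsum := sum_congr rfl fun z (_ : z ∈ univ) => h u x (y, z)
  simp only [Fintype.sum_prod_type, ← sum_mul, ← mul_sum] at hsum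
  rw [hsum, sum_comm (f := fun z u' => w u' x y z)]

lemma IsMarkovChain.sum_fst {w : U → X → Y → Z → ℝ}
    (h : IsMarkovChain fun u x (yz : Y × Z) => w u x yz.1 yz.2) :
    IsMarkovChain fun u x z => ∑ y, w u x y z := by
  intro u x z
  dsimp only
  have hsum := sum_congr rfl fun y (_ : y ∈ univ) => h u x (y, z)
  simp only [Fintype.sum_prod_type, ← sum_mul, ← mul_sum] at hsum
  convert hsum using 2
  · exact sum_congr rfl fun u' _ => sum_comm
  · exact sum_comm
  · exact sum_comm

variable [Fintype X]

/-- `I(U;Y) - I(U;Z)`, with unnormalized `mi`. -/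
noncomputable def gapU (v : U → X → Y → Z → ℝ) : ℝ :=
  mi (fun u y => ∑ x, ∑ z, v u x y z) - mi (fun u z => ∑ x, ∑ y, v u x y z)

/-- `I(X;Y) - I(X;Z) + I(X;Z|U) - I(X;Y|U)` for the normalized joint pmf `v / ∑ v`. -/
noncomputable def gapX (v : U → X → Y → Z → ℝ) : ℝ :=
  (mi (fun x y => (∑ u, ∑ z, v u x y z) / (∑ u, ∑ x, ∑ y, ∑ z, v u x y z))
    - mi (fun x z => (∑ u, ∑ y, v u x y z) / (∑ u, ∑ x, ∑ y, ∑ z, v u x y z)))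
  + (condMI (fun u x z => (∑ y, v u x y z) / (∑ u, ∑ x, ∑ y, ∑ z, v u x y z))
    - condMI (fun u x y => (∑ z, v u x y z) / (∑ u, ∑ x, ∑ y, ∑ z, v u x y z)))

lemma mass_mul_gapX {v : U → X → Y → Z → ℝ} (hv : ∀ u x y z, 0 ≤ v u x y z)
    (h : IsMarkovChain fun u x (yz : Y × Z) => v u x yz.1 yz.2) :
    (∑ u, ∑ x, ∑ y, ∑ z, v u x y z) * gapX v = gapU v := by
  set m := ∑ u, ∑ x, ∑ y, ∑ z, v u x y z
  have hmY : ∑ u, ∑ y, ∑ x, ∑ z, v u x y z = m :=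
    sum_congr rfl fun u _ => sum_comm
  have hmZ : ∑ u, ∑ z, ∑ x, ∑ y, v u x y z = m :=
    sum_congr rfl fun u _ =>
      sum_comm.trans (sum_congr rfl fun x _ => sum_comm)
  have hmXY : ∑ x, ∑ y, ∑ u, ∑ z, v u x y z = m :=
    (sum_congr rfl fun x _ => sum_comm).trans sum_comm
  have hmXZ : ∑ x, ∑ z, ∑ u, ∑ y, v u x y z = m :=
    (sum_congr rfl fun x _ => sum_comm).trans
      (sum_comm.trans (sum_congr rfl fun u _ => sum_congr rfl fun x _ =>
        sum_comm))
  have hvY : ∀ u x y, 0 ≤ ∑ z, v u x y z := fun u x y => sum_nonneg fun z _ => hv u x y z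
  have hvZ : ∀ u x z, 0 ≤ ∑ y, v u x y z := fun u x z => sum_nonneg fun y _ => hv u x y z
  have hUY : ∀ u y, 0 ≤ ∑ x, ∑ z, v u x y z := fun u y => sum_nonneg fun x _ => hvY u x y
  have hUZ : ∀ u z, 0 ≤ ∑ x, ∑ y, v u x y z := fun u z => sum_nonneg fun x _ => hvZ u x z
  have hXY : ∀ x y, 0 ≤ ∑ u, ∑ z, v u x y z := fun x y => sum_nonneg fun u _ => hvY u x y
  have hXZ : ∀ x z, 0 ≤ ∑ u, ∑ y, v u x y z := fun x z => sum_nonneg fun u _ => hvZ u x z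
  have hm0 : 0 ≤ m := sum_nonneg fun u _ => sum_nonneg fun x _ =>
    sum_nonneg fun y _ => hvY u x y
  rcases hm0.eq_or_lt with h0 | h0
  · rw [← h0, zero_mul, gapU, mi_eq_zero_of_sum_eq_zero _ hUY (hmY.trans h0.symm),
      mi_eq_zero_of_sum_eq_zero _ hUZ (hmZ.trans h0.symm), sub_zero]
  · rw [gapX, mul_add, mul_sub, mul_sub, mul_mi_div _ hXY h0, mul_mi_div _ hXZ h0,
      mul_condMI_div _ h0.ne', mul_condMI_div _ h0.ne', hmXY, hmXZ, gapU,
      h.sum_snd.mi_eq hvY, h.sum_fst.mi_eq hvZ]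
    ring

end Gaps

def onFiber {U X Y Z κ : Type*} [DecidableEq κ] (f : X → κ) (k : κ) (w : U → X → Y → Z → ℝ) :
    U → X → Y → Z → ℝ :=
  fun u x y z => if f x = k then w u x y z else 0

lemma onFiber_nonneg {U X Y Z κ : Type*} [DecidableEq κ] (f : X → κ) (k : κ)
    {w : U → X → Y → Z → ℝ} (hw : ∀ u x y z, 0 ≤ w u x y z) (u : U) (x : X) (y : Y) (z : Z) :
    0 ≤ onFiber f k w u x y z := by
  unfold onFiber
  split_ifs
  exacts [hw u x y z, le_rfl]

section Fibers

variable {U X Y Z κ : Type*} [Fintype U] [Fintype X] [Fintype Y] [Fintype Z] [Fintype κ]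
  [DecidableEq κ]

lemma sum_mass_onFiber (f : X → κ) (w : U → X → Y → Z → ℝ) :
    ∑ k, ∑ u, ∑ x, ∑ y, ∑ z, onFiber f k w u x y z = ∑ u, ∑ x, ∑ y, ∑ z, w u x y z := by
  rw [sum_comm]
  refine sum_congr rfl fun u _ => ?_
  rw [sum_comm]
  simp [onFiber]

lemma gapU_le_sum_gapU_onFiber (f : X → κ) {w : U → X → Y → Z → ℝ}
    (hw0 : ∀ u x y z, 0 ≤ w u x y z) (hw1 : ∑ u, ∑ x, ∑ y, ∑ z, w u x y z = 1) :
    gapU w ≤ ∑ k, gapU (onFiber f k w) + 2 * logb 2 (Fintype.card κ) := by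
  have hfib0 := fun k => onFiber_nonneg f k hw0
  have hY : ∀ u y, ∑ k, ∑ x, ∑ z, onFiber f k w u x y z = ∑ x, ∑ z, w u x y z := by
    intro u y; rw [sum_comm]; simp [onFiber]
  have hZ : ∀ u z, ∑ k, ∑ x, ∑ y, onFiber f k w u x y z = ∑ x, ∑ y, w u x y z := by
    intro u z; rw [sum_comm]; simp [onFiber]
  have hmarg : ∀ k u, ∑ y, ∑ x, ∑ z, onFiber f k w u x y z
      = ∑ z, ∑ x, ∑ y, onFiber f k w u x y z := fun k u =>
    sum_comm.trans ((sum_congr rfl fun x _ => sum_comm).trans sum_comm)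
  have hmassY : ∑ u, ∑ y, ∑ k, ∑ x, ∑ z, onFiber f k w u x y z = 1 := by
    simp only [hY]
    rw [← hw1]
    exact sum_congr rfl fun u _ => sum_comm
  have hmassZ : ∑ u, ∑ z, ∑ k, ∑ x, ∑ y, onFiber f k w u x y z = 1 := by
    simp only [hZ]
    rw [← hw1]
    exact sum_congr rfl fun u _ =>
      sum_comm.trans (sum_congr rfl fun x _ => sum_comm)
  have key := mi_sub_mi_le_sum_mi_sub_mi_add
    (fun k u y => ∑ x, ∑ z, onFiber f k w u x y z)
    (fun k u z => ∑ x, ∑ y, onFiber f k w u x y z)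
    (fun k u y => sum_nonneg fun x _ => sum_nonneg fun z _ => hfib0 k u x y z)
    (fun k u z => sum_nonneg fun x _ => sum_nonneg fun y _ => hfib0 k u x y z)
    hmarg hmassY hmassZ
  simp only [hY, hZ] at key
  exact key

end Fibers

lemma sum_mul_le_sup' {ι : Type*} [Fintype ι] (hne : (univ : Finset ι).Nonempty)
    (c F : ι → ℝ) (hc0 : ∀ i, 0 ≤ c i) (hc1 : ∑ i, c i = 1) :
    ∑ i, c i * F i ≤ univ.sup' hne F := by
  have h := Finset.centerMass_le_sup (s := univ) (f := F) (fun i _ => hc0 i)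
    (by rw [hc1]; exact one_pos)
  rwa [Finset.centerMass_eq_of_sum_1 _ _ hc1] at h

theorem stmt_19 {U X Y Z : Type*} [Fintype U] [Fintype X] [Fintype Y] [Fintype Z]
    (p : ℕ) (hp : 0 < p)
    (w : U → X → Y → Z → ℝ)  -- joint pmf of (U, X, Y, Z)
    (hw0 : ∀ u x y z, 0 ≤ w u x y z)
    (hw1 : ∑ u, ∑ x, ∑ y, ∑ z, w u x y z = 1)
    -- Markov chain U → X → (Y, Z):  P(u,x,y,z)·P(x) = P(u,x)·P(x,y,z)
    (hMarkov : ∀ u x y z,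
      w u x y z * (∑ u', ∑ y', ∑ z', w u' x y' z') =
        (∑ y', ∑ z', w u x y' z') * (∑ u', w u' x y z))
    (f : X → Fin p)  -- K = f(X)
    :
    mi (fun u y => ∑ x, ∑ z, w u x y z) - mi (fun u z => ∑ x, ∑ y, w u x y z) ≤
      (Finset.univ.sup' ⟨⟨0, hp⟩, Finset.mem_univ _⟩ (fun k =>
        (mi (fun x y => (∑ u, ∑ z, if f x = k then w u x y z else 0) /
              (∑ u, ∑ x, ∑ y, ∑ z, if f x = k then w u x y z else 0))
         - mi (fun x z => (∑ u, ∑ y, if f x = k then w u x y z else 0) /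
              (∑ u, ∑ x, ∑ y, ∑ z, if f x = k then w u x y z else 0)))
        + (condMI (fun u x z => (∑ y, if f x = k then w u x y z else 0) /
              (∑ u, ∑ x, ∑ y, ∑ z, if f x = k then w u x y z else 0))
         - condMI (fun u x y => (∑ z, if f x = k then w u x y z else 0) /
              (∑ u, ∑ x, ∑ y, ∑ z, if f x = k then w u x y z else 0)))))
      + 2 * Real.logb 2 p := by
  change gapU w ≤ univ.sup' _ (fun k => gapX (onFiber f k w)) + 2 * logb 2 p
  have hM : IsMarkovChain fun u x (yz : Y × Z) => w u x yz.1 yz.2 := fun u x yz => by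
    simpa only [Fintype.sum_prod_type] using hMarkov u x yz.1 yz.2
  have hfib0 := fun k => onFiber_nonneg f k hw0
  calc gapU w ≤ ∑ k, gapU (onFiber f k w) + 2 * logb 2 p := by
        simpa only [Fintype.card_fin] using gapU_le_sum_gapU_onFiber f hw0 hw1
    _ = ∑ k, (∑ u, ∑ x, ∑ y, ∑ z, onFiber f k w u x y z) * gapX (onFiber f k w)
          + 2 * logb 2 p := by
        congr 1
        exact sum_congr rfl fun k _ =>
          (mass_mul_gapX (hfib0 k) (hM.restrict fun x => f x = k)).symm
    _ ≤ univ.sup' _ (fun k => gapX (onFiber f k w)) + 2 * logb 2 p := by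
        gcongr
        exact sum_mul_le_sup' _ _ _
          (fun k => sum_nonneg fun u _ => sum_nonneg fun x _ =>
            sum_nonneg fun y _ => sum_nonneg fun z _ => hfib0 k u x y z)
          ((sum_mass_onFiber f w).trans hw1)
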